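/- arXiv:1507.01367 — 3 statements merged into one kernel-verified Lean document; each statement's English description precedes it below -/
import Mathlib

section
/- Let $(a_k)_{k\geq 1}$ be a sequence of nonnegative real numbers such that $a_k^2 \leq c + \sum_{j=1}^k \beta_j a_j$ for all $k$, where $c > 0$ and $(\beta_j)$ is a sequence of nonnegative reals with $\sum_{j=1}^\infty \beta_j < +\infty$. Then $a_k \leq \sqrt{c} + \sum_{j=1}^\infty \beta_j$ for all $k$. -/
/-!
If `m` is the largest of `a 1, …, a k`, bounding every `a j` in the sum by `m` gives
`m ^ 2 ≤ c + (∑' j, β j) * m`, and every solution of this quadratic inequality is at most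
`√c + ∑' j, β j`.
-/

open Finset

theorem le_sqrt_add_of_sq_le_add_mul {m c T : ℝ} (hT : 0 ≤ T) (h : m ^ 2 ≤ c + T * m) :
    m ≤ √c + T := by
  rcases le_total m T with hmT | hTm
  · linarith [Real.sqrt_nonneg c]
  · have hsq : (m - T) ^ 2 ≤ c := by nlinarith [mul_nonneg hT (sub_nonneg.2 hTm)]
    linarith [Real.abs_le_sqrt hsq, le_abs_self (m - T)]

theorem sum_mul_le_tsum_mul_of_le {ι : Type*} {β a : ι → ℝ} {s : Finset ι} {m : ℝ}
    (hβ : ∀ j, 0 ≤ β j) (hsum : Summable β) (hm : 0 ≤ m) (ha : ∀ j ∈ s, a j ≤ m) :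
    ∑ j ∈ s, β j * a j ≤ (∑' j, β j) * m :=
  calc ∑ j ∈ s, β j * a j ≤ ∑ j ∈ s, β j * m :=
        sum_le_sum fun j hj => mul_le_mul_of_nonneg_left (ha j hj) (hβ j)
    _ = (∑ j ∈ s, β j) * m := (sum_mul ..).symm
    _ ≤ (∑' j, β j) * m :=
        mul_le_mul_of_nonneg_right (hsum.sum_le_tsum s fun j _ => hβ j) hm

theorem discrete_gronwall_sq_general (a β : ℕ → ℝ) (c : ℝ)
    (ha : ∀ k, 0 ≤ a k) (hβ : ∀ j, 0 ≤ β j) (hsum : Summable β)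
    (h : ∀ k ≥ 1, (a k)^2 ≤ c + ∑ j ∈ Finset.Icc 1 k, β j * a j) :
    ∀ k ≥ 1, a k ≤ Real.sqrt c + ∑' j, β j := by
  intro k hk
  obtain ⟨j, hj, hj_max⟩ := exists_max_image (Icc 1 k) a ⟨k, mem_Icc.2 ⟨hk, le_rfl⟩⟩
  have hj_sq : a j ^ 2 ≤ c + (∑' i, β i) * a j :=
    (h j (mem_Icc.1 hj).1).trans <| add_le_add_right (sum_mul_le_tsum_mul_of_le hβ hsum (ha j)
      fun i hi => hj_max i (Icc_subset_Icc_right (mem_Icc.1 hj).2 hi)) c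
  exact (hj_max k (mem_Icc.2 ⟨hk, le_rfl⟩)).trans
    (le_sqrt_add_of_sq_le_add_mul (tsum_nonneg hβ) hj_sq)

theorem discrete_gronwall_sq (a β : ℕ → ℝ) (c : ℝ) (hc : 0 < c)
    (ha : ∀ k, 0 ≤ a k) (hβ : ∀ j, 0 ≤ β j) (hsum : Summable β)
    (h : ∀ k ≥ 1, (a k)^2 ≤ c + ∑ j ∈ Finset.Icc 1 k, β j * a j) :
    ∀ k ≥ 1, a k ≤ Real.sqrt c + ∑' j, β j :=
  discrete_gronwall_sq_general a β c ha hβ hsum h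
end

section
/- Let $\alpha \geq 3$ and let $(a_k)_{k\geq 1}$ be a sequence of nonnegative real numbers satisfying $a_{k+1} \leq \frac{k-1}{k+\alpha-1} a_k + \omega_k$ for all $k \geq 1$, where $(\omega_k)$ is a sequence of nonnegative reals with $\sum_k k\,\omega_k < +\infty$. Then $\sum_{k} a_k < +\infty$. -/
/-! Multiplying the recursion by `k + α - 1` gives
`(k a_{k+1} - (k - 1) a_k) + (α - 1) a_{k+1} ≤ (k + α - 1) ω_k`.
Summed over `k`, the bracket telescopes against the nonnegative potential `(k - 1) a_k`, so the
partial sums of `(α - 1) a` are bounded by `∑ (k + α - 1) ω_k`, which is finite because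
`∑ k ω_k` is. -/

open Finset

theorem summable_of_telescoping_le {a b c : ℕ → ℝ} {β : ℝ} (hβ : 0 < β) (ha : ∀ k, 0 ≤ a k)
    (hb : ∀ k, 0 ≤ b k) (hc : ∀ k, 0 ≤ c k) (hcs : Summable c)
    (hstep : ∀ k, b (k + 1) + β * a (k + 1) ≤ b k + c k) :
    Summable a := by
  have htelescope : ∀ n, b n + β * ∑ k ∈ range n, a (k + 1) ≤ b 0 + ∑ k ∈ range n, c k := by
    intro n
    induction n with
    | zero => simp
    | succ n ih =>
      rw [sum_range_succ, sum_range_succ, mul_add]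
      linarith [hstep n]
  refine (summable_nat_add_iff 1).mp <|
    summable_of_sum_range_le (c := (b 0 + ∑' k, c k) / β) (fun k => ha (k + 1)) fun n => ?_
  rw [le_div_iff₀' hβ]
  linarith [htelescope n, hb n, hcs.sum_le_tsum (range n) (fun k _ => hc k)]

theorem summable_add_mul_succ_of_summable_nat_mul {ω : ℕ → ℝ} (hω : ∀ k, 0 ≤ ω k)
    (hsum : Summable fun k : ℕ => (k : ℝ) * ω k) (α : ℝ) :
    Summable fun k : ℕ => ((k : ℝ) + α) * ω (k + 1) := by
  have hmul : Summable fun k : ℕ => ((k : ℝ) + 1) * ω (k + 1) := by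
    simpa using (summable_nat_add_iff 1).mpr hsum
  have hsucc : Summable fun k => ω (k + 1) :=
    hmul.of_nonneg_of_le (fun k => hω (k + 1)) fun k =>
      le_mul_of_one_le_left (hω (k + 1)) (by simp)
  convert hmul.add (hsucc.mul_left (α - 1)) using 2
  ring

theorem summable_of_recursive_ineq (α : ℝ) (hα : 3 ≤ α)
    (a ω : ℕ → ℝ) (ha : ∀ k, 0 ≤ a k) (hω : ∀ k, 0 ≤ ω k)
    (hsum : Summable (fun k : ℕ => (k : ℝ) * ω k))
    (hrec : ∀ k ≥ 1, a (k + 1) ≤ ((k : ℝ) - 1) / ((k : ℝ) + α - 1) * a k + ω k) :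
    Summable a := by
  have hstep : ∀ k : ℕ, ((k + 1 : ℕ) : ℝ) * a (k + 1 + 1) + (α - 1) * a (k + 1 + 1) ≤
      (k : ℝ) * a (k + 1) + ((k : ℝ) + α) * ω (k + 1) := by
    intro k
    have hden : (0 : ℝ) < k + α := by positivity
    have h := hrec (k + 1) k.succ_pos
    push_cast at h ⊢
    rw [show (k : ℝ) + 1 - 1 = k by ring, show (k : ℝ) + 1 + α - 1 = k + α by ring,
      div_mul_eq_mul_div, div_add' _ _ _ hden.ne', le_div_iff₀ hden] at h
    linarith
  refine (summable_nat_add_iff 1).mp <|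
    summable_of_telescoping_le (b := fun k => k * a (k + 1)) (by linarith) (fun k => ha (k + 1))
      (fun k => mul_nonneg k.cast_nonneg (ha (k + 1)))
      (fun k => mul_nonneg (by positivity) (hω (k + 1))) (summable_add_mul_succ_of_summable_nat_mul hω hsum α) hstep
end

section
/- Let $\delta > 0$, $\alpha > 1$, and let $w: [\delta, +\infty) \to \mathbb{R}$ be continuously differentiable and satisfy $\dot{w}(t) + \frac{\alpha}{t} w(t) \leq k(t)$ for some nonnegative function $k$ with $t \mapsto t\,k(t) \in L^1(\delta, +\infty)$. Then the positive part $w^+$ belongs to $L^1(\delta, +\infty)$. -/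
open MeasureTheory Set

open scoped ENNReal

/-! Multiplying the inequality by `t ^ α` gives `(t ^ α * w t)' ≤ t ^ α * k t`, hence
`w⁺ t ≤ t ^ (-α) * ((δ ^ α * w δ)⁺ + ∫ s in δ..t, s ^ α * k s)`. The first term is integrable on `(δ, ∞)`
because `α > 1`; by Tonelli, since `∫ t in Ioi s, t ^ (-α) = s ^ (1 - α) / (α - 1)`, the second
integrates to `(α - 1)⁻¹ * ∫ s in Ioi δ, s * k s`. Working in `ℝ≥0∞` lets Tonelli apply without
any integrability of the double integral, and `ENNReal.ofReal` discards the negative part of `w`. -/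

theorem MeasureTheory.ofReal_integral_le_lintegral_ofReal {X : Type*} [MeasurableSpace X]
    {μ : Measure X} (f : X → ℝ) :
    ENNReal.ofReal (∫ x, f x ∂μ) ≤ ∫⁻ x, ENNReal.ofReal (f x) ∂μ := by
  by_cases hf : Integrable f μ
  · rw [integral_eq_lintegral_pos_part_sub_lintegral_neg_part hf]
    exact (ENNReal.ofReal_le_ofReal (sub_le_self _ ENNReal.toReal_nonneg)).trans
      ENNReal.ofReal_toReal_le
  · simp [integral_undef hf]

theorem lintegral_mul_setLIntegral_Iic_eq (μ : Measure ℝ) [SFinite μ] {φ g : ℝ → ℝ≥0∞}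
    (hφ : AEMeasurable φ μ) (hg : AEMeasurable g μ) :
    ∫⁻ t, φ t * ∫⁻ s in Iic t, g s ∂μ ∂μ = ∫⁻ s, g s * ∫⁻ t in Ici s, φ t ∂μ ∂μ := by
  set K : ℝ × ℝ → ℝ≥0∞ := {p | p.2 ≤ p.1}.indicator fun p => φ p.1 * g p.2
  have hK : AEMeasurable K (μ.prod μ) :=
    (hφ.comp_fst.mul hg.comp_snd).indicator (measurableSet_le measurable_snd measurable_fst)
  calc ∫⁻ t, φ t * ∫⁻ s in Iic t, g s ∂μ ∂μ = ∫⁻ t, ∫⁻ s, K (t, s) ∂μ ∂μ := by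
        refine lintegral_congr fun t => ?_
        rw [← lintegral_indicator measurableSet_Iic,
          ← lintegral_const_mul'' _ (hg.indicator measurableSet_Iic)]
        refine lintegral_congr fun s => ?_
        by_cases h : s ≤ t <;> simp [K, h]
    _ = ∫⁻ s, ∫⁻ t, K (t, s) ∂μ ∂μ := lintegral_lintegral_swap hK
    _ = ∫⁻ s, g s * ∫⁻ t in Ici s, φ t ∂μ ∂μ := by
        refine lintegral_congr fun s => ?_
        rw [← lintegral_indicator measurableSet_Ici,
          ← lintegral_const_mul'' _ (hφ.indicator measurableSet_Ici)]
        refine lintegral_congr fun t => ?_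
        by_cases h : s ≤ t <;> simp [K, h, mul_comm]

theorem lintegral_Ioi_ofReal_rpow_neg {α s : ℝ} (hα : 1 < α) (hs : 0 < s) :
    ∫⁻ t in Ioi s, ENNReal.ofReal (t ^ (-α)) = ENNReal.ofReal (s ^ (1 - α) / (α - 1)) := by
  have hα' : -α < -1 := by linarith
  rw [← ofReal_integral_eq_lintegral_ofReal (integrableOn_Ioi_rpow_of_lt hα' hs)
    (ae_restrict_of_forall_mem measurableSet_Ioi fun t ht => Real.rpow_nonneg (hs.trans ht).le _),
    integral_Ioi_rpow_of_lt hα' hs]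
  congr 1
  rw [show -α + 1 = 1 - α by ring, neg_div, ← div_neg, neg_sub]

theorem lintegral_Ioi_ofReal_rpow_neg_mul_lintegral_Ioc {δ α : ℝ} (hδ : 0 ≤ δ) (hα : 1 < α)
    {h : ℝ → ℝ≥0∞} (hh : AEMeasurable h (volume.restrict (Ioi δ))) :
    ∫⁻ t in Ioi δ, ENNReal.ofReal (t ^ (-α)) * ∫⁻ s in Ioc δ t, ENNReal.ofReal (s ^ (α - 1)) * h s
      = ENNReal.ofReal (α - 1)⁻¹ * ∫⁻ s in Ioi δ, h s := by
  have swap := lintegral_mul_setLIntegral_Iic_eq (volume.restrict (Ioi δ))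
    (φ := fun t => ENNReal.ofReal (t ^ (-α))) (g := fun s => ENNReal.ofReal (s ^ (α - 1)) * h s)
    (by fun_prop) (by fun_prop)
  simp only [Measure.restrict_restrict measurableSet_Iic,
    Measure.restrict_restrict measurableSet_Ici, Iic_inter_Ioi] at swap
  rw [swap, ← lintegral_const_mul' _ _ ENNReal.ofReal_ne_top]
  refine setLIntegral_congr_fun measurableSet_Ioi fun s hs => ?_
  have hs0 : 0 < s := hδ.trans_lt hs
  rw [inter_eq_left.mpr (Ici_subset_Ioi.mpr hs), setLIntegral_congr Ioi_ae_eq_Ici.symm,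
    lintegral_Ioi_ofReal_rpow_neg hα hs0, mul_right_comm, ← ENNReal.ofReal_mul (by positivity),
    mul_div_assoc', ← Real.rpow_add hs0, show α - 1 + (1 - α) = 0 by ring, Real.rpow_zero,
    one_div, mul_comm]

theorem rpow_mul_eq_rpow_sub_one_mul {s : ℝ} (hs : s ≠ 0) (α c : ℝ) :
    s ^ α * c = s ^ (α - 1) * (s * c) := by
  rw [← mul_assoc, ← Real.rpow_add_one hs, sub_add_cancel]

theorem integrableOn_Icc_rpow_mul {δ α : ℝ} (hδ : 0 < δ) {k : ℝ → ℝ}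
    (hk : IntegrableOn (fun s => s * k s) (Ioi δ)) (t : ℝ) :
    IntegrableOn (fun s => s ^ α * k s) (Icc δ t) := by
  rw [integrableOn_Icc_iff_integrableOn_Ioc, integrableOn_congr_fun
    (fun s hs => rpow_mul_eq_rpow_sub_one_mul (hδ.trans hs.1).ne' α (k s)) measurableSet_Ioc]
  exact (hk.mono_set Ioc_subset_Ioi_self).continuousOn_mul_of_subset
    (fun s hs => (Real.continuousAt_rpow_const _ _
      (Or.inl (hδ.trans_le hs.1).ne')).continuousWithinAt) isCompact_Icc measurableSet_Ioc
    Ioc_subset_Icc_self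

theorem rpow_mul_sub_rpow_mul_le_integral {δ α t : ℝ} (hδ : 0 < δ) (hδt : δ ≤ t)
    {w w' k : ℝ → ℝ} (hw : ∀ s ∈ Icc δ t, HasDerivAt w (w' s) s)
    (hineq : ∀ s ∈ Ioo δ t, w' s + α / s * w s ≤ k s)
    (hk : IntegrableOn (fun s => s ^ α * k s) (Icc δ t)) :
    t ^ α * w t - δ ^ α * w δ ≤ ∫ s in δ..t, s ^ α * k s := by
  have hpos : ∀ s ∈ Icc δ t, s ≠ 0 := fun s hs => (hδ.trans_le hs.1).ne'
  refine intervalIntegral.sub_le_integral_of_hasDeriv_right_of_le hδt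
    (fun s hs => ((Real.continuousAt_rpow_const _ _ (Or.inl (hpos s hs))).mul
      (hw s hs).continuousAt).continuousWithinAt)
    (fun s hs => ((Real.hasDerivAt_rpow_const (Or.inl (hpos s (Ioo_subset_Icc_self hs)))).mul
      (hw s (Ioo_subset_Icc_self hs))).hasDerivWithinAt) hk fun s hs => ?_
  have hs0 : 0 < s := hδ.trans hs.1
  calc α * s ^ (α - 1) * w s + s ^ α * w' s = s ^ α * (w' s + α / s * w s) := by
        rw [Real.rpow_sub_one hs0.ne']; field_simp; ring
    _ ≤ s ^ α * k s := mul_le_mul_of_nonneg_left (hineq s hs) (by positivity)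

theorem enorm_max_zero_le_of_hasDerivAt {δ α t : ℝ} (hδ : 0 < δ) (hδt : δ < t)
    {w w' k : ℝ → ℝ} (hw : ∀ s ∈ Icc δ t, HasDerivAt w (w' s) s)
    (hineq : ∀ s ∈ Ioo δ t, w' s + α / s * w s ≤ k s)
    (hk : IntegrableOn (fun s => s ^ α * k s) (Icc δ t)) :
    ‖max (w t) 0‖ₑ ≤ ENNReal.ofReal (t ^ (-α)) * (ENNReal.ofReal (δ ^ α * w δ) +
      ∫⁻ s in Ioc δ t, ENNReal.ofReal (s ^ (α - 1)) * ENNReal.ofReal (s * k s)) := by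
  have ht0 : 0 < t := hδ.trans hδt
  have key := rpow_mul_sub_rpow_mul_le_integral hδ hδt.le hw hineq hk
  rw [intervalIntegral.integral_of_le hδt.le] at key
  calc ‖max (w t) 0‖ₑ = ENNReal.ofReal (t ^ (-α) * (t ^ α * w t)) := by
        rw [Real.enorm_of_nonneg (le_max_right _ _), Real.rpow_neg ht0.le,
          inv_mul_cancel_left₀ (by positivity)]
        simp [ENNReal.ofReal_max]
    _ ≤ ENNReal.ofReal (t ^ (-α)) * (ENNReal.ofReal (δ ^ α * w δ) +
          ENNReal.ofReal (∫ s in Ioc δ t, s ^ α * k s)) := by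
        rw [ENNReal.ofReal_mul (by positivity)]
        gcongr
        exact (ENNReal.ofReal_le_ofReal (by linarith)).trans ENNReal.ofReal_add_le
    _ ≤ _ := by
        gcongr
        refine (ofReal_integral_le_lintegral_ofReal _).trans_eq
          (setLIntegral_congr_fun measurableSet_Ioc fun s hs => ?_)
        have hs0 : 0 < s := hδ.trans hs.1
        rw [rpow_mul_eq_rpow_sub_one_mul hs0.ne', ENNReal.ofReal_mul (by positivity)]

theorem pos_part_integrable_general (δ α : ℝ) (hδ : 0 < δ) (hα : 1 < α)
    (w w' : ℝ → ℝ) (hw : ∀ t ∈ Ici δ, HasDerivAt w (w' t) t)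
    (k : ℝ → ℝ)
    (hkint : IntegrableOn (fun t => t * k t) (Ioi δ))
    (hineq : ∀ t ∈ Ici δ, w' t + (α / t) * w t ≤ k t) :
    IntegrableOn (fun t => max (w t) 0) (Ioi δ) := by
  refine ⟨ContinuousOn.aestronglyMeasurable (fun t ht => ((hw t (mem_Ici.mpr ht.le)
    ).continuousAt.continuousWithinAt).max continuousWithinAt_const) measurableSet_Ioi, ?_⟩
  rw [hasFiniteIntegral_iff_enorm]
  calc ∫⁻ t in Ioi δ, ‖max (w t) 0‖ₑ ≤ _ :=
        setLIntegral_mono' measurableSet_Ioi fun t ht =>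
          enorm_max_zero_le_of_hasDerivAt hδ ht (fun s hs => hw s hs.1)
            (fun s hs => hineq s hs.1.le) (integrableOn_Icc_rpow_mul hδ hkint t)
    _ = ENNReal.ofReal (δ ^ α * w δ) * (∫⁻ t in Ioi δ, ENNReal.ofReal (t ^ (-α))) +
        ENNReal.ofReal (α - 1)⁻¹ * ∫⁻ s in Ioi δ, ENNReal.ofReal (s * k s) := by
      simp_rw [mul_add]
      rw [lintegral_add_left (by fun_prop), lintegral_mul_const' _ _ ENNReal.ofReal_ne_top,
        lintegral_Ioi_ofReal_rpow_neg_mul_lintegral_Ioc hδ.le hα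
          hkint.aemeasurable.ennreal_ofReal, mul_comm]
    _ < ⊤ := by
      rw [lintegral_Ioi_ofReal_rpow_neg hα hδ]
      exact ENNReal.add_lt_top.mpr ⟨ENNReal.mul_lt_top ENNReal.ofReal_lt_top
        ENNReal.ofReal_lt_top, ENNReal.mul_lt_top ENNReal.ofReal_lt_top
          ((lintegral_ofReal_le_lintegral_enorm _).trans_lt hkint.2)⟩

theorem pos_part_integrable (δ α : ℝ) (hδ : 0 < δ) (hα : 1 < α)
    (w w' : ℝ → ℝ) (hw : ∀ t ∈ Ici δ, HasDerivAt w (w' t) t)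
    (k : ℝ → ℝ) (hk0 : ∀ t ∈ Ici δ, 0 ≤ k t)
    (hkint : IntegrableOn (fun t => t * k t) (Ioi δ))
    (hineq : ∀ t ∈ Ici δ, w' t + (α / t) * w t ≤ k t) :
    IntegrableOn (fun t => max (w t) 0) (Ioi δ) :=
  pos_part_integrable_general δ α hδ hα w w' hw k hkint hineq
end
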